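/- Let p : Ω → Λ be a covering of connected k-graphs. Then the induced continuous map p̃ : X_Ω → X_Λ, p̃([ω,t]) = [p(ω),t], is a topological covering map: every point of X_Λ has an open neighborhood U such that p̃⁻¹(U) is a disjoint union of open sets each mapped homeomorphically onto U by p̃. -/

import Mathlib

/-- A `k`-graph: a countable small category (objects identified with the
identity morphisms, i.e. the morphisms of degree `0`) equipped with a degree
functor `d : Λ → ℕᵏ` satisfying the unique factorization property. -/
structure KGraph (k : ℕ) where
  /-- The morphisms of the category. -/
  Mor : Type
  /-- The category is countable. -/
  countable : Countable Mor
  /-- The source (domain) of a morphism, viewed as a degree-zero morphism. -/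
  src : Mor → Mor
  /-- The range (codomain) of a morphism, viewed as a degree-zero morphism. -/
  rng : Mor → Mor
  /-- Composition `comp a b = a ∘ b`, meaningful when `src a = rng b`. -/
  comp : Mor → Mor → Mor
  /-- The degree functor. -/
  deg : Mor → Fin k → ℕ
  src_src : ∀ a, src (src a) = src a
  rng_src : ∀ a, rng (src a) = src a
  src_rng : ∀ a, src (rng a) = rng a
  rng_rng : ∀ a, rng (rng a) = rng a
  deg_src : ∀ a, deg (src a) = 0
  deg_rng : ∀ a, deg (rng a) = 0
  src_comp : ∀ a b, src a = rng b → src (comp a b) = src b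
  rng_comp : ∀ a b, src a = rng b → rng (comp a b) = rng a
  comp_assoc : ∀ a b c, src a = rng b → src b = rng c →
    comp (comp a b) c = comp a (comp b c)
  id_comp : ∀ a, comp (rng a) a = a
  comp_id : ∀ a, comp a (src a) = a
  deg_comp : ∀ a b, src a = rng b → deg (comp a b) = deg a + deg b
  /-- The unique factorization property. -/
  factor : ∀ (a : Mor) (m n : Fin k → ℕ), deg a = m + n →
    ∃! p : Mor × Mor, deg p.1 = m ∧ deg p.2 = n ∧ src p.1 = rng p.2 ∧
      comp p.1 p.2 = a

namespace KGraph

variable {k : ℕ} (Λ : KGraph k)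

/-- The segment `a(m,n)` of a morphism `a`, i.e. the (unique) middle factor of
`a = a(0,m) a(m,n) a(n, d(a))`; junk value `a` if no such factorization exists. -/
noncomputable def seg (a : Λ.Mor) (m n : Fin k → ℕ) : Λ.Mor :=
  letI := Classical.propDecidable
  if h : ∃ b : Λ.Mor, Λ.deg b = n - m ∧ ∃ x y : Λ.Mor,
      Λ.deg x = m ∧ Λ.src x = Λ.rng b ∧ Λ.src b = Λ.rng y ∧
      a = Λ.comp x (Λ.comp b y)
  then h.choose else a

/-- The points `⨆_{λ ∈ Λ} {λ} × [0, d(λ)]` of which the topological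
realization is a quotient; topologized as a disjoint union of subspaces of `ℝᵏ`. -/
def Points : Type :=
  Σ a : Λ.Mor, { t : Fin k → ℝ // ∀ i, 0 ≤ t i ∧ t i ≤ (Λ.deg a i : ℝ) }

instance : TopologicalSpace Λ.Points :=
  inferInstanceAs (TopologicalSpace
    (Σ a : Λ.Mor, { t : Fin k → ℝ // ∀ i, 0 ≤ t i ∧ t i ≤ (Λ.deg a i : ℝ) }))

/-- Coordinatewise floor `⌊t⌋` (as a vector of naturals; this is the honest
floor on the relevant region `t ≥ 0`). -/
noncomputable def fl (t : Fin k → ℝ) : Fin k → ℕ := fun i => (⌊t i⌋).toNat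

/-- Coordinatewise ceiling `⌈t⌉`. -/
noncomputable def ce (t : Fin k → ℝ) : Fin k → ℕ := fun i => (⌈t i⌉).toNat

/-- The fractional part `t - ⌊t⌋`. -/
noncomputable def frac (t : Fin k → ℝ) : Fin k → ℝ := fun i => t i - ((⌊t i⌋).toNat : ℝ)

/-- The relation `(μ,s) ∼ (ν,t) ⟺ μ(⌊s⌋,⌈s⌉) = ν(⌊t⌋,⌈t⌉)` and
`s - ⌊s⌋ = t - ⌊t⌋` defining the topological realization. -/
def ptRel : Λ.Points → Λ.Points → Prop := fun p q =>
  Λ.seg p.1 (fl p.2.1) (ce p.2.1) = Λ.seg q.1 (fl q.2.1) (ce q.2.1) ∧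
    frac p.2.1 = frac q.2.1

/-- `ptRel` is an equivalence relation. -/
def ptSetoid : Setoid Λ.Points where
  r := Λ.ptRel
  iseqv := ⟨fun _ => ⟨rfl, rfl⟩, fun h => ⟨h.1.symm, h.2.symm⟩,
    fun h h' => ⟨h.1.trans h'.1, h.2.trans h'.2⟩⟩

/-- The topological realization `X_Λ` of the `k`-graph `Λ`. -/
def Real : Type := Quotient Λ.ptSetoid

instance : TopologicalSpace Λ.Real :=
  inferInstanceAs (TopologicalSpace (Quotient Λ.ptSetoid))

/-- The class `[λ, t] ∈ X_Λ` of a pair `(λ, t)` with `0 ≤ t ≤ d(λ)`. -/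
def pt (a : Λ.Mor) (t : Fin k → ℝ) (h : ∀ i, 0 ≤ t i ∧ t i ≤ (Λ.deg a i : ℝ)) :
    Λ.Real :=
  Quotient.mk Λ.ptSetoid ⟨a, ⟨t, h⟩⟩

/-- The open cube `Q_λ = {[λ,t] : t ∈ (0, d(λ))}` of a morphism `λ` (of degree
`≤ (1,…,1)`). -/
def Qcube (lam : Λ.Mor) : Set Λ.Real :=
  { x | ∃ (t : Fin k → ℝ) (h : ∀ i, 0 ≤ t i ∧ t i ≤ (Λ.deg lam i : ℝ)),
      (∀ i, Λ.deg lam i = 1 → 0 < t i ∧ t i < 1) ∧ x = Λ.pt lam t h }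

/-- The `r`-skeleton `X_Λ^r` of the topological realization. -/
def skel' (G : KGraph k) : ℕ → Set G.Real
  | 0 => ⋃ v ∈ { v : G.Mor | G.deg v = 0 }, G.Qcube v
  | (r+1) => skel' G r ∪
      ⋃ lam ∈ { lam : G.Mor | G.deg lam ≤ 1 ∧ ∑ i, G.deg lam i = r + 1 },
        G.Qcube lam

/-- The `r`-skeleton (wrapper). -/
def skel (r : ℕ) : Set Λ.Real := skel' Λ r

/-- A `k`-graph is connected if any two vertices are joined by an undirected
path of morphisms. -/
def Connected : Prop :=
  ∀ u v : Λ.Mor, Λ.deg u = 0 → Λ.deg v = 0 →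
    Relation.ReflTransGen (fun x y => ∃ e : Λ.Mor,
      (Λ.src e = x ∧ Λ.rng e = y) ∨ (Λ.src e = y ∧ Λ.rng e = x)) u v

end KGraph

/-- A morphism of `k`-graphs: a degree-preserving functor. -/
@[ext]
structure KGraphHom {k : ℕ} (Λ Γ : KGraph k) where
  toFun : Λ.Mor → Γ.Mor
  map_src : ∀ a, toFun (Λ.src a) = Γ.src (toFun a)
  map_rng : ∀ a, toFun (Λ.rng a) = Γ.rng (toFun a)
  map_comp : ∀ a b, Λ.src a = Λ.rng b →
    toFun (Λ.comp a b) = Γ.comp (toFun a) (toFun b)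
  map_deg : ∀ a, Γ.deg (toFun a) = Λ.deg a

namespace KGraphHom

variable {k : ℕ} {Λ Γ Θ : KGraph k}

/-- The identity `k`-graph morphism. -/
def id (Λ : KGraph k) : KGraphHom Λ Λ :=
  ⟨fun a => a, fun _ => rfl, fun _ => rfl, fun _ _ _ => rfl, fun _ => rfl⟩

/-- Composition of `k`-graph morphisms. -/
def comp (ψ : KGraphHom Γ Θ) (φ : KGraphHom Λ Γ) : KGraphHom Λ Θ where
  toFun := ψ.toFun ∘ φ.toFun
  map_src a := by simp [Function.comp, φ.map_src, ψ.map_src]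
  map_rng a := by simp [Function.comp, φ.map_rng, ψ.map_rng]
  map_comp a b h := by
    simp only [Function.comp]
    rw [φ.map_comp a b h, ψ.map_comp _ _ (by rw [← φ.map_src, ← φ.map_rng, h])]
  map_deg a := by simp [Function.comp, φ.map_deg, ψ.map_deg]

/-- The induced map on points `(λ, t) ↦ (φ(λ), t)`. -/
def pointMap (φ : KGraphHom Λ Γ) : Λ.Points → Γ.Points :=
  fun p => ⟨φ.toFun p.1, ⟨p.2.1, fun i => by rw [φ.map_deg]; exact p.2.2 i⟩⟩

/-- The induced map `φ̃ : X_Λ → X_Γ` on topological realizations,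
`φ̃([λ,t]) = [φ(λ), t]` (defined via choice of representatives). -/
noncomputable def real (φ : KGraphHom Λ Γ) : Λ.Real → Γ.Real :=
  fun x => Quotient.mk Γ.ptSetoid (φ.pointMap (Quotient.out x))

end KGraphHom

/-- A covering of `k`-graphs: a surjective degree-preserving functor
`p : Ω → Λ` mapping `Ωv` bijectively onto `Λp(v)` and `vΩ` bijectively onto
`p(v)Λ` for every vertex `v` of `Ω`. -/
def KGraphHom.IsCovering {k : ℕ} {Ω Λ : KGraph k} (p : KGraphHom Ω Λ) : Prop :=
  Function.Surjective p.toFun ∧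
    ∀ v : Ω.Mor, Ω.deg v = 0 →
      Set.BijOn p.toFun { a | Ω.src a = v } { b | Λ.src b = p.toFun v } ∧
      Set.BijOn p.toFun { a | Ω.rng a = v } { b | Λ.rng b = p.toFun v }

/-!
Around `x = [λ, t]` let `c = λ(⌊t⌋, ⌈t⌉)` be the cell carrying `x` and `τ = t - ⌊t⌋`. The star
of `c`, made of the `(μ, s)` in which `c` occurs at some `m` with `s` within a small `ε` of
`m + τ`, is open, and membership in it depends only on the class of `(μ, s)` because `m` can be
read off from `⌊s⌋` and `s - ⌊s⌋`; its image `U` is the neighbourhood of `x`. Since `p` is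
bijective on the morphisms into and out of each vertex, a factorization `x p(c') y` in `Λ` lifts
to a unique `x' c' y'` in `Ω`, so `(μ, s) ↦ (p μ, s)` maps the star of each lift `c'` of `c`
bijectively onto the star of `c` modulo the relations, and the stars of distinct lifts are
disjoint. Being open on the disjoint union of cubes, this map induces homeomorphisms of the
sheets onto `U`.
-/

def IsEvenlyCoveredSet {E B : Type*} [TopologicalSpace E] [TopologicalSpace B] (F : E → B)
    (U : Set B) : Prop :=
  ∃ (ι : Type) (V : ι → Set E), F ⁻¹' U = ⋃ i, V i ∧ Pairwise (Function.onFun Disjoint V) ∧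
    ∀ i, IsOpen (V i) ∧ ∃ h : V i ≃ₜ U, ∀ y : V i, (h y).1 = F y.1

namespace Quotient

variable {X Y : Type*} {r : Setoid X} {s : Setoid Y}

theorem preimage_image_mk_of_saturated {S : Set X} (hS : ∀ x ∈ S, ∀ x', r x' x → x' ∈ S) :
    Quotient.mk r ⁻¹' (Quotient.mk r '' S) = S :=
  Set.Subset.antisymm (fun _ ⟨x, hx, he⟩ => hS x hx _ (Quotient.exact he.symm))
    (Set.subset_preimage_image _ _)

variable [TopologicalSpace X] [TopologicalSpace Y]

theorem isOpen_image_mk {S : Set X} (hS : IsOpen S) (hsat : ∀ x ∈ S, ∀ x', r x' x → x' ∈ S) :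
    IsOpen (Quotient.mk r '' S) := by
  refine isQuotientMap_quotient_mk'.isOpen_preimage.1 ?_
  change IsOpen (Quotient.mk r ⁻¹' _)
  rwa [preimage_image_mk_of_saturated hsat]

variable {f : X → Y} {F : Quotient r → Quotient s} {S : Set X} {T : Set Y}

theorem isOpen_image_of_subset_image_mk (hF : ∀ x, F (Quotient.mk r x) = Quotient.mk s (f x))
    (hf : IsOpenMap f) (hS : IsOpen S) (hT : ∀ y ∈ T, ∀ y', s y' y → y' ∈ T) (hST : f '' S = T)
    (hinj : ∀ x ∈ S, ∀ x' ∈ S, s (f x) (f x') → r x x')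
    {W : Set (Quotient r)} (hW : IsOpen W) (hWS : W ⊆ Quotient.mk r '' S) :
    IsOpen (F '' W) := by
  set A := S ∩ Quotient.mk r ⁻¹' W
  have hFW : F '' W = Quotient.mk s '' (f '' A) := by
    ext z
    constructor
    · rintro ⟨_, hw, rfl⟩
      obtain ⟨x, hx, rfl⟩ := hWS hw
      exact ⟨f x, ⟨x, ⟨hx, hw⟩, rfl⟩, (hF x).symm⟩
    · rintro ⟨_, ⟨x, ⟨-, hx⟩, rfl⟩, rfl⟩
      exact ⟨_, hx, hF x⟩
  -- saturation of `T` and injectivity of `f` modulo the relations keep `f '' A` saturated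
  have hA_sat : ∀ y ∈ f '' A, ∀ y', s y' y → y' ∈ f '' A := by
    rintro _ ⟨x, ⟨hxS, hxW⟩, rfl⟩ y' hy'
    have hfx : f x ∈ T := hST ▸ Set.mem_image_of_mem f hxS
    obtain ⟨x', hx'S, rfl⟩ : y' ∈ f '' S := hST ▸ hT _ hfx y' hy'
    refine ⟨x', ⟨hx'S, ?_⟩, rfl⟩
    rwa [Set.mem_preimage, Quotient.sound (hinj x' hx'S x hxS hy')]
  rw [hFW]
  exact isOpen_image_mk (hf _ (hS.inter (hW.preimage continuous_quotient_mk'))) hA_sat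

theorem exists_homeomorph_image_mk (hF : ∀ x, F (Quotient.mk r x) = Quotient.mk s (f x))
    (hFc : Continuous F) (hf : IsOpenMap f) (hS : IsOpen S)
    (hSsat : ∀ x ∈ S, ∀ x', r x' x → x' ∈ S) (hT : ∀ y ∈ T, ∀ y', s y' y → y' ∈ T)
    (hST : f '' S = T) (hinj : ∀ x ∈ S, ∀ x' ∈ S, s (f x) (f x') → r x x') :
    ∃ h : Quotient.mk r '' S ≃ₜ Quotient.mk s '' T, ∀ y, (h y).1 = F y.1 := by
  set V := Quotient.mk r '' S
  have hV : IsOpen V := isOpen_image_mk hS hSsat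
  have hinjective : Function.Injective (F ∘ Subtype.val : V → Quotient s) := by
    rintro ⟨_, x, hx, rfl⟩ ⟨_, x', hx', rfl⟩ h
    change F (Quotient.mk r x) = F (Quotient.mk r x') at h
    rw [hF, hF] at h
    exact Subtype.ext (Quotient.sound (hinj x hx x' hx' (Quotient.exact h)))
  have hopen : IsOpenMap (F ∘ Subtype.val : V → Quotient s) := fun O hO => by
    rw [Set.image_comp]
    exact isOpen_image_of_subset_image_mk hF hf hS hT hST hinj (hV.isOpenMap_subtype_val O hO)
      (Subtype.coe_image_subset V O)
  have hrange : Set.range (F ∘ Subtype.val : V → Quotient s) = Quotient.mk s '' T := by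
    rw [Set.range_comp, Subtype.range_coe, Set.image_image, ← hST, Set.image_image]
    simp only [hF]
  exact ⟨(Topology.IsOpenEmbedding.of_continuous_injective_isOpenMap (hFc.comp
    continuous_subtype_val) hinjective hopen).isEmbedding.toHomeomorph.trans
    (Homeomorph.setCongr hrange), fun _ => rfl⟩

theorem isEvenlyCoveredSet_image_mk (hF : ∀ x, F (Quotient.mk r x) = Quotient.mk s (f x))
    (hFc : Continuous F) (hf : IsOpenMap f) {ι : Type} {S : ι → Set X}
    (hS : ∀ i, IsOpen (S i)) (hSsat : ∀ i, ∀ x ∈ S i, ∀ x', r x' x → x' ∈ S i)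
    (hdisj : Pairwise (Function.onFun Disjoint S)) (hT : ∀ y ∈ T, ∀ y', s y' y → y' ∈ T)
    (hpre : f ⁻¹' T = ⋃ i, S i) (hST : ∀ i, f '' S i = T)
    (hinj : ∀ i, ∀ x ∈ S i, ∀ x' ∈ S i, s (f x) (f x') → r x x') :
    IsEvenlyCoveredSet F (Quotient.mk s '' T) := by
  refine ⟨ι, fun i => Quotient.mk r '' S i, ?_, fun i j hij => ?_, fun i =>
    ⟨isOpen_image_mk (hS i) (hSsat i),
      exists_homeomorph_image_mk hF hFc hf (hS i) (hSsat i) hT (hST i) (hinj i)⟩⟩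
  · ext z
    induction z using Quotient.inductionOn with | h x => ?_
    simp only [Set.mem_preimage, hF, Set.mem_iUnion]
    rw [← Set.mem_preimage (f := Quotient.mk s), preimage_image_mk_of_saturated hT,
      ← Set.mem_preimage, hpre, Set.mem_iUnion]
    simp only [← Set.mem_preimage (f := Quotient.mk r), preimage_image_mk_of_saturated (hSsat _)]
  · rw [Function.onFun, Set.disjoint_left]
    rintro _ ⟨x, hx, rfl⟩ hx'
    rw [← Set.mem_preimage, preimage_image_mk_of_saturated (hSsat j)] at hx'
    exact Set.disjoint_left.1 (hdisj hij) hx hx'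

end Quotient

namespace KGraph

variable {k : ℕ} {Λ : KGraph k}

theorem eq_of_comp_eq {x₁ y₁ x₂ y₂ : Λ.Mor} (h₁ : Λ.src x₁ = Λ.rng y₁)
    (h₂ : Λ.src x₂ = Λ.rng y₂) (h : Λ.comp x₁ y₁ = Λ.comp x₂ y₂) (hd : Λ.deg x₁ = Λ.deg x₂) :
    x₁ = x₂ ∧ y₁ = y₂ := by
  have hdy : Λ.deg y₁ = Λ.deg y₂ :=
    add_left_cancel (by rw [← Λ.deg_comp _ _ h₁, h, Λ.deg_comp _ _ h₂, hd])
  obtain ⟨q, -, hq⟩ := Λ.factor (Λ.comp x₁ y₁) (Λ.deg x₁) (Λ.deg y₁) (Λ.deg_comp _ _ h₁)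
  exact Prod.ext_iff.1 ((hq (x₁, y₁) ⟨rfl, rfl, h₁, rfl⟩).trans
    (hq (x₂, y₂) ⟨hd.symm, hdy.symm, h₂, h.symm⟩).symm)

theorem eq_of_comp_comp_eq {x₁ b₁ y₁ x₂ b₂ y₂ : Λ.Mor}
    (hx₁ : Λ.src x₁ = Λ.rng b₁) (hb₁ : Λ.src b₁ = Λ.rng y₁)
    (hx₂ : Λ.src x₂ = Λ.rng b₂) (hb₂ : Λ.src b₂ = Λ.rng y₂)
    (h : Λ.comp x₁ (Λ.comp b₁ y₁) = Λ.comp x₂ (Λ.comp b₂ y₂))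
    (hdx : Λ.deg x₁ = Λ.deg x₂) (hdb : Λ.deg b₁ = Λ.deg b₂) :
    x₁ = x₂ ∧ b₁ = b₂ ∧ y₁ = y₂ := by
  obtain ⟨rfl, h'⟩ := eq_of_comp_eq (hx₁.trans (Λ.rng_comp _ _ hb₁).symm)
    (hx₂.trans (Λ.rng_comp _ _ hb₂).symm) h hdx
  exact ⟨rfl, eq_of_comp_eq hb₁ hb₂ h' hdb⟩

variable (Λ) in
def OccursAt (a b : Λ.Mor) (m : Fin k → ℕ) : Prop :=
  ∃ x y : Λ.Mor, Λ.deg x = m ∧ Λ.src x = Λ.rng b ∧ Λ.src b = Λ.rng y ∧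
    a = Λ.comp x (Λ.comp b y)

theorem OccursAt.eq {a b b' : Λ.Mor} {m : Fin k → ℕ} (h : Λ.OccursAt a b m)
    (h' : Λ.OccursAt a b' m) (hd : Λ.deg b = Λ.deg b') : b = b' := by
  obtain ⟨x, y, hx, hxb, hby, rfl⟩ := h
  obtain ⟨x', y', hx', hxb', hby', he⟩ := h'
  exact (eq_of_comp_comp_eq hxb hby hxb' hby' he (hx.trans hx'.symm) hd).2.1

theorem OccursAt.trans {a e b : Λ.Mor} {m n : Fin k → ℕ} (hae : Λ.OccursAt a e m)
    (heb : Λ.OccursAt e b n) : Λ.OccursAt a b (m + n) := by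
  obtain ⟨x, y, rfl, hxe, hey, rfl⟩ := hae
  obtain ⟨u, v, rfl, hub, hbv, rfl⟩ := heb
  have hvy : Λ.src v = Λ.rng y := by
    rwa [Λ.src_comp _ _ (by rw [hub, Λ.rng_comp _ _ hbv]), Λ.src_comp _ _ hbv] at hey
  have hxu : Λ.src x = Λ.rng u := by
    rwa [Λ.rng_comp _ _ (by rw [hub, Λ.rng_comp _ _ hbv])] at hxe
  have hbvy : Λ.src b = Λ.rng (Λ.comp v y) := hbv.trans (Λ.rng_comp _ _ hvy).symm
  refine ⟨Λ.comp x u, Λ.comp v y, Λ.deg_comp _ _ hxu, (Λ.src_comp _ _ hxu).trans hub, hbvy, ?_⟩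
  have hu : Λ.src u = Λ.rng (Λ.comp b v) := hub.trans (Λ.rng_comp _ _ hbv).symm
  rw [Λ.comp_assoc _ _ _ hu ((Λ.src_comp _ _ hbv).trans hvy), Λ.comp_assoc _ _ _ hbv hvy,
    ← Λ.comp_assoc _ _ _ hxu (hub.trans (Λ.rng_comp _ _ hbvy).symm)]

theorem OccursAt.add_deg_le {a b : Λ.Mor} {m : Fin k → ℕ} (h : Λ.OccursAt a b m) :
    m + Λ.deg b ≤ Λ.deg a := by
  obtain ⟨x, y, rfl, hxb, hby, rfl⟩ := h
  rw [Λ.deg_comp _ _ (hxb.trans (Λ.rng_comp _ _ hby).symm), Λ.deg_comp _ _ hby, ← add_assoc]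
  exact le_self_add

theorem seg_eq_of_occursAt {a b : Λ.Mor} {m n : Fin k → ℕ} (h : Λ.OccursAt a b m)
    (hd : Λ.deg b = n - m) : Λ.seg a m n = b := by
  unfold seg
  split_ifs with hex
  · exact OccursAt.eq hex.choose_spec.2 h (hex.choose_spec.1.trans hd.symm)
  · exact absurd ⟨b, hd, h⟩ hex

theorem seg_spec {a : Λ.Mor} {m n : Fin k → ℕ} (hmn : m ≤ n) (hn : n ≤ Λ.deg a) :
    Λ.deg (Λ.seg a m n) = n - m ∧ Λ.OccursAt a (Λ.seg a m n) m := by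
  obtain ⟨⟨x, z⟩, ⟨hdx, hdz, hxz, hxza⟩, -⟩ :=
    Λ.factor a m (Λ.deg a - m) (add_tsub_cancel_of_le (hmn.trans hn)).symm
  obtain ⟨⟨b, y⟩, ⟨hdb, -, hby, rfl⟩, -⟩ := Λ.factor z (n - m) (Λ.deg a - n)
    (by rw [hdz, ← tsub_add_tsub_cancel hn hmn, add_comm])
  have hocc : Λ.OccursAt a b m := ⟨x, y, hdx, hxz.trans (Λ.rng_comp _ _ hby), hby, hxza.symm⟩
  rw [seg_eq_of_occursAt hocc hdb]
  exact ⟨hdb, hocc⟩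

theorem seg_seg {a : Λ.Mor} {m' n' m n : Fin k → ℕ} (hmn : m ≤ n) (hn : m' + n ≤ n')
    (hn' : n' ≤ Λ.deg a) : Λ.seg (Λ.seg a m' n') m n = Λ.seg a (m' + m) (m' + n) := by
  have hm'n' : m' ≤ n' := le_self_add.trans hn
  obtain ⟨hde, hae⟩ := seg_spec hm'n' hn'
  obtain ⟨hdb, heb⟩ := seg_spec (a := Λ.seg a m' n') hmn
    (hde ▸ le_tsub_of_add_le_left hn)
  exact (seg_eq_of_occursAt (hae.trans heb) (by rw [hdb, add_tsub_add_eq_tsub_left])).symm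

theorem occursAt_seg_of_occursAt {a c : Λ.Mor} {m o n : Fin k → ℕ} (h : Λ.OccursAt a c (m + o))
    (hn : m + (o + Λ.deg c) ≤ n) (hn' : n ≤ Λ.deg a) : Λ.OccursAt (Λ.seg a m n) c o := by
  have hc : Λ.seg (Λ.seg a m n) o (o + Λ.deg c) = c := by
    rw [seg_seg le_self_add hn hn']
    exact seg_eq_of_occursAt h (by rw [add_tsub_add_eq_tsub_left, add_tsub_cancel_left])
  have hle : o + Λ.deg c ≤ Λ.deg (Λ.seg a m n) := by
    rw [(seg_spec (le_self_add.trans hn) hn').1]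
    exact le_tsub_of_add_le_left hn
  simpa only [hc] using (seg_spec le_self_add hle).2

end KGraph

namespace KGraphHom

variable {k : ℕ} {Λ Γ : KGraph k} (φ : KGraphHom Λ Γ)

theorem src_map_eq_rng_map {x y : Λ.Mor} (h : Λ.src x = Λ.rng y) :
    Γ.src (φ.toFun x) = Γ.rng (φ.toFun y) := by
  rw [← φ.map_src, ← φ.map_rng, h]

theorem map_comp_comp {x b y : Λ.Mor} (hxb : Λ.src x = Λ.rng b) (hby : Λ.src b = Λ.rng y) :
    φ.toFun (Λ.comp x (Λ.comp b y)) = Γ.comp (φ.toFun x) (Γ.comp (φ.toFun b) (φ.toFun y)) := by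
  rw [φ.map_comp _ _ (hxb.trans (Λ.rng_comp _ _ hby).symm), φ.map_comp _ _ hby]

theorem occursAt_map {a b : Λ.Mor} {m : Fin k → ℕ} (h : Λ.OccursAt a b m) :
    Γ.OccursAt (φ.toFun a) (φ.toFun b) m := by
  obtain ⟨x, y, hx, hxb, hby, rfl⟩ := h
  exact ⟨φ.toFun x, φ.toFun y, (φ.map_deg x).trans hx, φ.src_map_eq_rng_map hxb,
    φ.src_map_eq_rng_map hby, φ.map_comp_comp hxb hby⟩

theorem map_seg {a : Λ.Mor} {m n : Fin k → ℕ} (hmn : m ≤ n) (hn : n ≤ Λ.deg a) :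
    φ.toFun (Λ.seg a m n) = Γ.seg (φ.toFun a) m n := by
  obtain ⟨hd, hocc⟩ := KGraph.seg_spec hmn hn
  exact (KGraph.seg_eq_of_occursAt (φ.occursAt_map hocc) ((φ.map_deg _).trans hd)).symm

theorem exists_occursAt_of_occursAt_map {a : Λ.Mor} {c : Γ.Mor} {m : Fin k → ℕ}
    (h : Γ.OccursAt (φ.toFun a) c m) : ∃ c', φ.toFun c' = c ∧ Λ.OccursAt a c' m := by
  obtain ⟨hd, hocc⟩ := KGraph.seg_spec le_self_add (φ.map_deg a ▸ h.add_deg_le)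
  exact ⟨_, (φ.occursAt_map hocc).eq h (by rw [φ.map_deg, hd, add_tsub_cancel_left]), hocc⟩

end KGraphHom

namespace KGraphHom.IsCovering

variable {k : ℕ} {Ω Λ : KGraph k} {p : KGraphHom Ω Λ}

theorem exists_lift_of_occursAt (hp : p.IsCovering) {c : Ω.Mor} {b : Λ.Mor} {m : Fin k → ℕ}
    (h : Λ.OccursAt b (p.toFun c) m) : ∃ a, p.toFun a = b ∧ Ω.OccursAt a c m := by
  obtain ⟨x, y, hx, hxc, hcy, rfl⟩ := h
  obtain ⟨y', hy', rfl⟩ := (hp.2 (Ω.src c) (Ω.deg_src c)).2.surjOn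
    (show Λ.rng y = p.toFun (Ω.src c) by rw [p.map_src, hcy])
  obtain ⟨x', hx', rfl⟩ := (hp.2 (Ω.rng c) (Ω.deg_rng c)).1.surjOn
    (show Λ.src x = p.toFun (Ω.rng c) by rw [p.map_rng, hxc])
  exact ⟨_, p.map_comp_comp hx' hy'.symm, x', y', (p.map_deg x').symm.trans hx, hx', hy'.symm, rfl⟩

theorem eq_of_occursAt (hp : p.IsCovering) {c a₁ a₂ : Ω.Mor} {m : Fin k → ℕ}
    (h₁ : Ω.OccursAt a₁ c m) (h₂ : Ω.OccursAt a₂ c m) (he : p.toFun a₁ = p.toFun a₂) :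
    a₁ = a₂ := by
  obtain ⟨x₁, y₁, hx₁, hxc₁, hcy₁, rfl⟩ := h₁
  obtain ⟨x₂, y₂, hx₂, hxc₂, hcy₂, rfl⟩ := h₂
  rw [p.map_comp_comp hxc₁ hcy₁, p.map_comp_comp hxc₂ hcy₂] at he
  obtain ⟨hx, -, hy⟩ := KGraph.eq_of_comp_comp_eq (p.src_map_eq_rng_map hxc₁)
    (p.src_map_eq_rng_map hcy₁) (p.src_map_eq_rng_map hxc₂) (p.src_map_eq_rng_map hcy₂) he
    (by rw [p.map_deg, p.map_deg, hx₁, hx₂]) rfl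
  rw [(hp.2 _ (Ω.deg_rng c)).1.injOn hxc₁ hxc₂ hx,
    (hp.2 _ (Ω.deg_src c)).2.injOn hcy₁.symm hcy₂.symm hy]

end KGraphHom.IsCovering

namespace KGraph

variable {k : ℕ}

theorem fl_apply (t : Fin k → ℝ) (i : Fin k) : fl t i = ⌊t i⌋₊ := Int.floor_toNat _

theorem ce_apply (t : Fin k → ℝ) (i : Fin k) : ce t i = ⌈t i⌉₊ := Int.ceil_toNat _

theorem frac_apply (t : Fin k → ℝ) (i : Fin k) : frac t i = t i - ⌊t i⌋₊ := by
  rw [frac, Int.floor_toNat]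

/-- `τ` is the fractional part of the centre of a star and `ε` its radius. -/
structure StarData (k : ℕ) where
  τ : Fin k → ℝ
  ε : ℝ
  ε_pos : 0 < ε
  ε_le_half : ε ≤ 1 / 2
  τ_mem : ∀ i, τ i = 0 ∨ ε ≤ τ i ∧ τ i ≤ 1 - ε

namespace StarData

variable (D : StarData k)

/-- The degree of the cell containing the points of fractional part `τ`. -/
noncomputable def cellDeg : Fin k → ℕ := fun i => if D.τ i = 0 then 0 else 1

/-- Where that cell sits in the unit cube `(⌊t⌋, ⌈t⌉)` of a point `t` of fractional part `f`
near `τ`: in a direction where `τ` vanishes, `f` close to `1` puts it at the far end. -/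
noncomputable def offset (f : Fin k → ℝ) : Fin k → ℕ :=
  fun i => if D.τ i = 0 ∧ 1 / 2 < f i then 1 else 0

variable {D} {s : Fin k → ℝ} {i : Fin k}

theorem eq_fl_add_offset {μ : ℕ} (hs : 0 ≤ s i) (h : |s i - (μ + D.τ i)| < D.ε) :
    μ = fl s i + D.offset (frac s) i := by
  have hε := D.ε_pos
  have hε₂ := D.ε_le_half
  rw [abs_sub_lt_iff] at h
  simp only [offset, fl_apply, frac_apply]
  rcases D.τ_mem i with hτ | ⟨hτ₁, hτ₂⟩
  · simp only [hτ, add_zero, true_and] at h ⊢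
    rcases le_or_gt (μ : ℝ) (s i) with hμ | hμ
    · have hfl : ⌊s i⌋₊ = μ := (Nat.floor_eq_iff hs).2 ⟨hμ, by linarith⟩
      rw [hfl, if_neg (by linarith)]
      rfl
    · obtain ⟨n, rfl⟩ := Nat.exists_eq_succ_of_ne_zero
        (show μ ≠ 0 by rintro rfl; push_cast at hμ; linarith)
      push_cast at h hμ
      have hfl : ⌊s i⌋₊ = n := (Nat.floor_eq_iff hs).2 ⟨by linarith, hμ⟩
      rw [hfl, if_pos (by linarith)]
  · have hfl : ⌊s i⌋₊ = μ := (Nat.floor_eq_iff hs).2 ⟨by linarith, by linarith⟩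
    rw [hfl, if_neg (fun h' => by linarith [h'.1])]
    rfl

theorem fl_add_offset_add_cellDeg_le
    (h : |frac s i - (D.offset (frac s) i + D.τ i)| < D.ε) :
    fl s i + (D.offset (frac s) i + D.cellDeg i) ≤ ce s i := by
  have hε := D.ε_pos
  have hfl_lt : 0 < frac s i → fl s i < ce s i := fun hf => by
    rw [fl_apply, ce_apply, Nat.lt_ceil]
    rw [frac_apply] at hf
    linarith
  have hfl_le : fl s i ≤ ce s i := by rw [fl_apply, ce_apply]; exact Nat.floor_le_ceil _
  rw [abs_sub_lt_iff] at h
  simp only [offset, cellDeg] at h ⊢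
  rcases D.τ_mem i with hτ | ⟨hτ₁, -⟩
  · simp only [hτ, true_and]
    split_ifs with hf
    · exact hfl_lt (by linarith)
    · exact hfl_le
  · have hτ : D.τ i ≠ 0 := by linarith
    simp only [hτ, false_and, if_false, zero_add, Nat.cast_zero] at h ⊢
    exact hfl_lt (by linarith)

theorem fl_add_cellDeg_eq_ce (hτ : D.τ = frac s) (hs : 0 ≤ s i) :
    fl s i + D.cellDeg i = ce s i := by
  simp only [cellDeg, hτ, frac_apply, fl_apply, ce_apply]
  split_ifs with hf
  · rw [show s i = ⌊s i⌋₊ by linarith, Nat.floor_natCast, Nat.ceil_natCast, add_zero]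
  · have h₁ : ⌊s i⌋₊ < ⌈s i⌉₊ :=
      Nat.lt_ceil.2 (lt_of_le_of_ne (Nat.floor_le hs) (fun h' => hf (by linarith)))
    have h₂ := Nat.ceil_le_floor_add_one (s i)
    omega

theorem exists_τ_eq_frac (hs : ∀ i, 0 ≤ s i) : ∃ D : StarData k, D.τ = frac s := by
  have hf (i : Fin k) : 0 ≤ frac s i ∧ frac s i < 1 := by
    rw [frac_apply]
    exact ⟨sub_nonneg.2 (Nat.floor_le (hs i)), by linarith [Nat.lt_floor_add_one (s i)]⟩
  have hev : ∀ᶠ ε in nhds (0 : ℝ),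
      ε ≤ 1 / 2 ∧ ∀ i, frac s i = 0 ∨ ε ≤ frac s i ∧ frac s i ≤ 1 - ε := by
    refine (eventually_le_nhds (show (0 : ℝ) < 1 / 2 by norm_num)).and
      (Filter.eventually_all.2 fun i => ?_)
    rcases (hf i).1.eq_or_lt with h | h
    · exact Filter.Eventually.of_forall fun _ => Or.inl h.symm
    · filter_upwards [eventually_le_nhds h, eventually_le_nhds (sub_pos.2 (hf i).2)] with ε h₁ h₂
      exact Or.inr ⟨h₁, by linarith⟩
  obtain ⟨ε, ⟨hε₁, hε₂⟩, hε⟩ :=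
    ((hev.filter_mono nhdsWithin_le_nhds).and (eventually_mem_nhdsWithin (s := Set.Ioi 0))).exists
  exact ⟨⟨frac s, ε, hε, hε₁, hε₂⟩, rfl⟩

end StarData

variable (Λ : KGraph k)

noncomputable def carrier (w : Λ.Points) : Λ.Mor := Λ.seg w.1 (fl w.2.1) (ce w.2.1)

def star (D : StarData k) (c : Λ.Mor) : Set Λ.Points :=
  {w | Λ.deg c = D.cellDeg ∧ ∃ m, Λ.OccursAt w.1 c m ∧ ∀ i, |w.2.1 i - (m i + D.τ i)| < D.ε}

variable {Λ} {D : StarData k}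

theorem fl_le_ce (w : Λ.Points) : fl w.2.1 ≤ ce w.2.1 := fun i => by
  rw [fl_apply, ce_apply]
  exact Nat.floor_le_ceil _

theorem ce_le_deg (w : Λ.Points) : ce w.2.1 ≤ Λ.deg w.1 := fun i => by
  rw [ce_apply]
  exact Nat.ceil_le.2 (w.2.2 i).2

theorem deg_carrier (w : Λ.Points) : Λ.deg (Λ.carrier w) = ce w.2.1 - fl w.2.1 :=
  (seg_spec (fl_le_ce w) (ce_le_deg w)).1

theorem occursAt_carrier (w : Λ.Points) : Λ.OccursAt w.1 (Λ.carrier w) (fl w.2.1) :=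
  (seg_spec (fl_le_ce w) (ce_le_deg w)).2

/-- Membership in a star depends only on the class of a point in the realization. -/
theorem mem_star_iff {w : Λ.Points} {c : Λ.Mor} :
    w ∈ Λ.star D c ↔ Λ.deg c = D.cellDeg ∧ Λ.OccursAt (Λ.carrier w) c (D.offset (frac w.2.1)) ∧
      ∀ i, |frac w.2.1 i - (D.offset (frac w.2.1) i + D.τ i)| < D.ε := by
  set o := D.offset (frac w.2.1)
  have hdist : ∀ i, w.2.1 i - ((fl w.2.1 + o) i + D.τ i) = frac w.2.1 i - (o i + D.τ i) :=
    fun i => by simp only [Pi.add_apply, Nat.cast_add, frac_apply, fl_apply]; ring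
  refine and_congr_right fun hc => ⟨?_, ?_⟩
  · rintro ⟨m, hocc, hm⟩
    obtain rfl : m = fl w.2.1 + o :=
      funext fun i => StarData.eq_fl_add_offset (w.2.2 i).1 (hm i)
    have hclose : ∀ i, |frac w.2.1 i - (o i + D.τ i)| < D.ε := fun i => hdist i ▸ hm i
    have hle : fl w.2.1 + (o + Λ.deg c) ≤ ce w.2.1 :=
      hc ▸ fun i => StarData.fl_add_offset_add_cellDeg_le (hclose i)
    exact ⟨occursAt_seg_of_occursAt hocc hle (ce_le_deg w), hclose⟩
  · rintro ⟨hocc, hclose⟩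
    exact ⟨fl w.2.1 + o, (occursAt_carrier w).trans hocc, fun i => (hdist i).symm ▸ hclose i⟩

theorem ptRel_iff {v w : Λ.Points} :
    Λ.ptRel v w ↔ Λ.carrier v = Λ.carrier w ∧ frac v.2.1 = frac w.2.1 :=
  Iff.rfl

theorem star_saturated (D : StarData k) (c : Λ.Mor) :
    ∀ w ∈ Λ.star D c, ∀ v, Λ.ptSetoid v w → v ∈ Λ.star D c := fun w hw v hvw => by
  obtain ⟨hcarrier, hfrac⟩ := ptRel_iff.1 hvw
  rw [mem_star_iff] at hw ⊢
  rwa [hcarrier, hfrac]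

theorem eq_of_mem_star {w : Λ.Points} {c₁ c₂ : Λ.Mor} (h₁ : w ∈ Λ.star D c₁)
    (h₂ : w ∈ Λ.star D c₂) : c₁ = c₂ := by
  obtain ⟨hd₁, hocc₁, -⟩ := mem_star_iff.1 h₁
  obtain ⟨hd₂, hocc₂, -⟩ := mem_star_iff.1 h₂
  exact hocc₁.eq hocc₂ (hd₁.trans hd₂.symm)

theorem isOpen_star (D : StarData k) (c : Λ.Mor) : IsOpen (Λ.star D c) := by
  have h : Λ.star D c = ⋃ m : Fin k → ℕ,
      {w : Λ.Points | Λ.deg c = D.cellDeg ∧ Λ.OccursAt w.1 c m} ∩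
        {w : Λ.Points | ∀ i, |w.2.1 i - (m i + D.τ i)| < D.ε} := by
    ext w
    rw [Set.mem_iUnion]
    exact ⟨fun ⟨hc, m, hm, hd⟩ => ⟨m, ⟨hc, hm⟩, hd⟩, fun ⟨m, ⟨hc, hm⟩, hd⟩ => ⟨hc, m, hm, hd⟩⟩
  have hcoord (i : Fin k) : Continuous fun w : Λ.Points => w.2.1 i :=
    (continuous_apply i).comp (continuous_sigma fun _ => continuous_subtype_val)
  rw [h]
  refine isOpen_iUnion fun m => IsOpen.inter ?_ ?_
  · exact isOpen_sigma_fst_preimage {a : Λ.Mor | Λ.deg c = D.cellDeg ∧ Λ.OccursAt a c m}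
  simp only [Set.ofPred_forall]
  exact isOpen_iInter_of_finite fun i => isOpen_lt (by fun_prop) continuous_const

theorem mem_star_carrier {w : Λ.Points} (hD : D.τ = frac w.2.1) : w ∈ Λ.star D (Λ.carrier w) := by
  have hce : fl w.2.1 + D.cellDeg = ce w.2.1 :=
    funext fun i => StarData.fl_add_cellDeg_eq_ce hD (w.2.2 i).1
  refine ⟨?_, fl w.2.1, occursAt_carrier w, fun i => ?_⟩
  · rw [deg_carrier, ← hce, add_tsub_cancel_left]
  · rw [hD, frac_apply, fl_apply, add_sub_cancel, sub_self, abs_zero]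
    exact D.ε_pos

end KGraph

namespace KGraphHom

open KGraph

variable {k : ℕ} {Ω Λ : KGraph k} (p : KGraphHom Ω Λ) {D : StarData k}

theorem isOpenMap_pointMap : IsOpenMap p.pointMap := by
  let e (a : Ω.Mor) : {t : Fin k → ℝ // ∀ i, 0 ≤ t i ∧ t i ≤ (Ω.deg a i : ℝ)} ≃ₜ
      {t : Fin k → ℝ // ∀ i, 0 ≤ t i ∧ t i ≤ (Λ.deg (p.toFun a) i : ℝ)} :=
    (Homeomorph.refl _).subtype fun t => by simp only [Homeomorph.refl_apply, id_eq, p.map_deg]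
  change IsOpenMap
    (Sigma.map (β₁ := fun a => {t : Fin k → ℝ // ∀ i, 0 ≤ t i ∧ t i ≤ (Ω.deg a i : ℝ)})
      (β₂ := fun b => {t : Fin k → ℝ // ∀ i, 0 ≤ t i ∧ t i ≤ (Λ.deg b i : ℝ)}) p.toFun
      fun a => e a)
  exact isOpenMap_sigma_map.2 fun a => (e a).isOpenMap

theorem pointMap_surjective (hp : Function.Surjective p.toFun) :
    Function.Surjective p.pointMap := by
  rintro ⟨b, t, ht⟩
  obtain ⟨a, rfl⟩ := hp b
  exact ⟨⟨a, t, fun i => by rw [← p.map_deg]; exact ht i⟩, rfl⟩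

theorem carrier_pointMap (w : Ω.Points) : Λ.carrier (p.pointMap w) = p.toFun (Ω.carrier w) :=
  (p.map_seg (fl_le_ce w) (ce_le_deg w)).symm

theorem pointMap_mem_star {c : Ω.Mor} {w : Ω.Points} (hw : w ∈ Ω.star D c) :
    p.pointMap w ∈ Λ.star D (p.toFun c) := by
  obtain ⟨hc, m, hm, hd⟩ := hw
  exact ⟨(p.map_deg c).trans hc, m, p.occursAt_map hm, hd⟩

theorem preimage_pointMap_star (D : StarData k) (c : Λ.Mor) :
    p.pointMap ⁻¹' Λ.star D c = ⋃ c' : {c' // p.toFun c' = c}, Ω.star D c'.1 := by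
  ext w
  rw [Set.mem_preimage, Set.mem_iUnion]
  constructor
  · rintro ⟨hc, m, hm, hd⟩
    obtain ⟨c', rfl, hc'⟩ := p.exists_occursAt_of_occursAt_map hm
    exact ⟨⟨c', rfl⟩, (p.map_deg c').symm.trans hc, m, hc', hd⟩
  · rintro ⟨⟨c', rfl⟩, hw⟩
    exact p.pointMap_mem_star hw

namespace IsCovering

variable {p}

theorem image_pointMap_star (hp : p.IsCovering) (D : StarData k) (c : Ω.Mor) :
    p.pointMap '' Ω.star D c = Λ.star D (p.toFun c) := by
  refine Set.Subset.antisymm (Set.image_subset_iff.2 fun _ => p.pointMap_mem_star) ?_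
  rintro ⟨b, t, ht⟩ ⟨hc, m, hm, hd⟩
  obtain ⟨a, rfl, ha⟩ := hp.exists_lift_of_occursAt hm
  exact ⟨⟨a, t, fun i => by rw [← p.map_deg]; exact ht i⟩,
    ⟨(p.map_deg c).symm.trans hc, m, ha, hd⟩, rfl⟩

theorem ptRel_of_ptRel_pointMap (hp : p.IsCovering) {c : Ω.Mor} {v w : Ω.Points}
    (hv : v ∈ Ω.star D c) (hw : w ∈ Ω.star D c) (h : Λ.ptRel (p.pointMap v) (p.pointMap w)) :
    Ω.ptRel v w := by
  obtain ⟨hcarrier, hfrac⟩ := ptRel_iff.1 h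
  rw [carrier_pointMap, carrier_pointMap] at hcarrier
  change frac v.2.1 = frac w.2.1 at hfrac
  obtain ⟨-, hv, -⟩ := mem_star_iff.1 hv
  obtain ⟨-, hw, -⟩ := mem_star_iff.1 hw
  rw [← hfrac] at hw
  exact ⟨hp.eq_of_occursAt hv hw hcarrier, hfrac⟩

end IsCovering

end KGraphHom

theorem covering_realization_is_covering_map_general
    {k : ℕ} (Ω Λ : KGraph k)
    (p : KGraphHom Ω Λ) (hp : p.IsCovering)
    (F : C(Ω.Real, Λ.Real))
    (hF : ∀ (a : Ω.Mor) (t : Fin k → ℝ)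
      (hb : ∀ i, 0 ≤ t i ∧ t i ≤ (Ω.deg a i : ℝ))
      (hb' : ∀ i, 0 ≤ t i ∧ t i ≤ (Λ.deg (p.toFun a) i : ℝ)),
      F (Ω.pt a t hb) = Λ.pt (p.toFun a) t hb') :
    Function.Surjective F ∧
    ∀ x : Λ.Real, ∃ U : Set Λ.Real, IsOpen U ∧ x ∈ U ∧
      ∃ (ι : Type) (V : ι → Set Ω.Real),
        (⇑F ⁻¹' U = ⋃ i, V i) ∧
        (Pairwise (Function.onFun Disjoint V)) ∧
        ∀ i, IsOpen (V i) ∧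
          ∃ h : ↥(V i) ≃ₜ ↥U, ∀ y : ↥(V i), (h y).1 = F y.1 := by
  have hF' (w : Ω.Points) : F (Quotient.mk _ w) = Quotient.mk _ (p.pointMap w) :=
    hF w.1 w.2.1 w.2.2 (p.pointMap w).2.2
  refine ⟨?_, fun x => ?_⟩
  · have h : ⇑F ∘ Quotient.mk _ = Quotient.mk _ ∘ p.pointMap := funext hF'
    exact Function.Surjective.of_comp (h ▸ Quotient.mk_surjective.comp (p.pointMap_surjective hp.1))
  obtain ⟨w, rfl⟩ := Quotient.exists_rep x
  obtain ⟨D, hD⟩ := KGraph.StarData.exists_τ_eq_frac fun i => (w.2.2 i).1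
  refine ⟨_, Quotient.isOpen_image_mk (Λ.isOpen_star D _) (Λ.star_saturated D _),
    ⟨w, KGraph.mem_star_carrier hD, rfl⟩, ?_⟩
  exact Quotient.isEvenlyCoveredSet_image_mk hF' F.continuous p.isOpenMap_pointMap
    (fun c => Ω.isOpen_star D c.1) (fun c => Ω.star_saturated D c.1)
    (fun c₁ c₂ hne => Set.disjoint_left.2 fun _ h₁ h₂ =>
      hne (Subtype.ext (KGraph.eq_of_mem_star h₁ h₂)))
    (Λ.star_saturated D _) (p.preimage_pointMap_star D _)
    (fun c => by rw [hp.image_pointMap_star, c.2])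
    (fun _ _ hv _ hw => hp.ptRel_of_ptRel_pointMap hv hw)

/-- If `p : Ω → Λ` is a covering of connected `k`-graphs,
then the induced continuous map `p̃ : X_Ω → X_Λ`, `p̃([ω,t]) = [p(ω),t]`, is a
topological covering map: it is surjective and every point of `X_Λ` has an open
neighborhood `U` such that `p̃⁻¹(U)` is a disjoint union of open sets, each
mapped homeomorphically onto `U` by `p̃`. -/
theorem covering_realization_is_covering_map
    {k : ℕ} (Ω Λ : KGraph k) (hΩ : Ω.Connected) (hΛ : Λ.Connected)
    (p : KGraphHom Ω Λ) (hp : p.IsCovering)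
    (F : C(Ω.Real, Λ.Real))
    (hF : ∀ (a : Ω.Mor) (t : Fin k → ℝ)
      (hb : ∀ i, 0 ≤ t i ∧ t i ≤ (Ω.deg a i : ℝ))
      (hb' : ∀ i, 0 ≤ t i ∧ t i ≤ (Λ.deg (p.toFun a) i : ℝ)),
      F (Ω.pt a t hb) = Λ.pt (p.toFun a) t hb') :
    Function.Surjective F ∧
    ∀ x : Λ.Real, ∃ U : Set Λ.Real, IsOpen U ∧ x ∈ U ∧
      ∃ (ι : Type) (V : ι → Set Ω.Real),
        (⇑F ⁻¹' U = ⋃ i, V i) ∧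
        (Pairwise (Function.onFun Disjoint V)) ∧
        ∀ i, IsOpen (V i) ∧
          ∃ h : ↥(V i) ≃ₜ ↥U, ∀ y : ↥(V i), (h y).1 = F y.1 :=
  covering_realization_is_covering_map_general Ω Λ p hp F hF
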